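/- arXiv:1910.09258 — 6 statements merged into one kernel-verified Lean document; each statement's English description precedes it below -/
import Mathlib

section
/- Every finite partial combinatory algebra has exactly one element. -/
/-- Partial application lifted to `Option` (strict: defined iff both sides defined). -/
def pap {A : Type*} (f : A → A → Option A) (x y : Option A) : Option A :=
  x.bind fun a => y.bind fun b => f a b

/-- A partial combinatory algebra, via Feferman's characterization with combinators `k`, `s`. -/
structure PCA (A : Type*) where
  app : A → A → Option A
  k : A
  s : A
  k_spec : ∀ a b : A, pap app (pap app (some k) (some a)) (some b) = some a
  s_defined : ∀ a b : A, (pap app (pap app (some s) (some a)) (some b)).isSome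
  s_spec : ∀ a b c : A,
    pap app (pap app (pap app (some s) (some a)) (some b)) (some c)
      = pap app (pap app (some a) (some c)) (pap app (some b) (some c))

namespace PCA
variable {A : Type*}

/-- Application on (possibly undefined) terms. -/
def ap (P : PCA A) (x y : Option A) : Option A := pap P.app x y

def K' (P : PCA A) : Option A := some P.k
def S' (P : PCA A) : Option A := some P.s
/-- The identity combinator `i = s·k·k`. -/
def i (P : PCA A) : Option A := P.ap (P.ap P.S' P.K') P.K'
/-- `true = k`. -/
def tru (P : PCA A) : Option A := P.K'
/-- `false = k·i`. -/
def fls (P : PCA A) : Option A := P.ap P.K' P.i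
/-- Pairing `⟨a,b⟩ = λ*z. z·a·b`, implemented as `s·(s·i·(k·a))·(k·b)`. -/
def pair (P : PCA A) (x y : Option A) : Option A :=
  P.ap (P.ap P.S' (P.ap (P.ap P.S' P.i) (P.ap P.K' x))) (P.ap P.K' y)
/-- Numerals: `0̄ = i`, `(n+1)‾ = ⟨false, n̄⟩`. -/
def numeral (P : PCA A) : ℕ → Option A
  | 0 => P.i
  | n + 1 => P.pair P.fls (P.numeral n)
/-- An element is total if it is defined on every argument. -/
def total (P : PCA A) (f : A) : Prop := ∀ a : A, (P.app f a).isSome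

end PCA

/-!
The map `a ↦ k·a` is total and injective, since `k·a·c = a` recovers `a`; on a finite carrier it
is therefore surjective, so `k = k·a` for some `a`. Then `k·b = k·a·b = a` for every `b`: the
injective map `b ↦ k·b` is constant.
-/

def IsKCombinator {A : Type*} (app : A → A → Option A) (k : A) : Prop :=
  ∀ a b : A, pap app (pap app (some k) (some a)) (some b) = some a

namespace IsKCombinator

variable {A : Type*} {app : A → A → Option A} {k : A}

theorem exists_app_eq_some (hk : IsKCombinator app k) (a : A) : ∃ f, app k a = some f := by
  have h := hk a a
  cases hka : app k a with
  | none => simp [pap, hka] at h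
  | some f => exact ⟨f, rfl⟩

theorem app_app_eq (hk : IsKCombinator app k) {a f : A} (hf : app k a = some f) (b : A) :
    app f b = some a := by
  simpa [pap, hf] using hk a b

theorem eq_of_app_eq (hk : IsKCombinator app k) {a b f : A} (ha : app k a = some f)
    (hb : app k b = some f) : a = b :=
  Option.some_injective A ((hk.app_app_eq ha k).symm.trans (hk.app_app_eq hb k))

theorem subsingleton [Finite A] (hk : IsKCombinator app k) : Subsingleton A := by
  choose kApp hkApp using hk.exists_app_eq_some
  have hinj : Function.Injective kApp := fun a b h => hk.eq_of_app_eq (hkApp a) (h ▸ hkApp b)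
  obtain ⟨a, ha⟩ := Finite.surjective_of_injective hinj k
  have hconst : ∀ b, kApp b = a := fun b => by
    have hb : app k b = some a := ha ▸ hk.app_app_eq (hkApp a) b
    exact Option.some_injective A ((hkApp b).symm.trans hb)
  exact ⟨fun b c => hinj ((hconst b).trans (hconst c).symm)⟩

end IsKCombinator

/-- Every finite partial combinatory algebra has exactly one element. -/
theorem finite_pca_has_exactly_one_element {A : Type*} [Finite A] (P : PCA A) :
    ∃ a : A, ∀ b : A, b = a :=
  have := IsKCombinator.subsingleton P.k_spec
  ⟨P.k, fun b => Subsingleton.elim b P.k⟩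
end

section
/- Post's theorem fails in Kleene's second model K₂: the set A = {0̄} (the all-zero sequence) and its complement are both c.e. in K₂, but A is not decidable in K₂: there is no continuous total functional γ on ω^ω taking one constant value t on 0̄ and a different constant value f on all other sequences. -/
/-!
Both c.e. witnesses can be taken constant on their domains. For decidability: `0̄` is not
isolated in Baire space (changing one far-out coordinate gives nearby points), so `{0̄}ᶜ` is
dense, and a continuous map that is constant on a dense set is constant everywhere.
-/

open Filter Topology

theorem exists_part_dom_iff_continuous {X Y : Type*} [TopologicalSpace X] [TopologicalSpace Y]
    (p : X → Prop) (c : Y) :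
    ∃ F : X → Part Y, (∀ x, (F x).Dom ↔ p x) ∧
      Continuous fun y : {x // (F x).Dom} => (F y.1).get y.2 :=
  ⟨fun x => ⟨p x, fun _ => c⟩, fun _ => Iff.rfl, continuous_const⟩

theorem tendsto_update_cofinite_nhds {ι : Type*} {X : ι → Type*} [DecidableEq ι]
    [∀ i, TopologicalSpace (X i)] (x y : ∀ i, X i) :
    Tendsto (fun i => Function.update x i (y i)) cofinite (𝓝 x) := by
  refine tendsto_pi_nhds.2 fun j => tendsto_const_nhds.congr' ?_
  filter_upwards [eventually_cofinite_ne j] with i hi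
  exact (Function.update_of_ne hi.symm _ _).symm

instance Pi.perfectSpace_of_infinite {ι : Type*} [Infinite ι] {X : ι → Type*}
    [∀ i, TopologicalSpace (X i)] [∀ i, Nontrivial (X i)] : PerfectSpace (∀ i, X i) := by
  classical
  refine perfectSpace_iff_forall_not_isolated.2 fun x => ?_
  choose y hy using fun i => exists_ne (x i)
  have hne : ∀ i, Function.update x i (y i) ≠ x := fun i h => hy i <| by
    simpa using congrFun h i
  exact (tendsto_nhdsWithin_iff.2
    ⟨tendsto_update_cofinite_nhds x y, Eventually.of_forall hne⟩).neBot

theorem Continuous.eq_of_forall_ne_eq {X Y : Type*} [TopologicalSpace X] [TopologicalSpace Y]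
    [T2Space Y] {γ : X → Y} (hγ : Continuous γ) {x₀ : X} [NeBot (𝓝[≠] x₀)] {c : Y}
    (h : ∀ x, x ≠ x₀ → γ x = c) : γ x₀ = c :=
  congrFun (hγ.ext_on (dense_compl_singleton x₀) continuous_const h) x₀

/-- Post's theorem fails in Kleene's second model: `{0̄}` and its complement are
both domains of partial continuous functionals on Baire space, but no total
continuous functional decides `{0̄}` with two distinct constant values. -/
theorem post_theorem_fails_in_K2 :
    (∃ F : (ℕ → ℕ) → Part (ℕ → ℕ),
      (∀ x : ℕ → ℕ, (F x).Dom ↔ x = fun _ => 0) ∧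
      Continuous fun y : {x : ℕ → ℕ // (F x).Dom} => (F y.1).get y.2) ∧
    (∃ G : (ℕ → ℕ) → Part (ℕ → ℕ),
      (∀ x : ℕ → ℕ, (G x).Dom ↔ x ≠ fun _ => 0) ∧
      Continuous fun y : {x : ℕ → ℕ // (G x).Dom} => (G y.1).get y.2) ∧
    ∀ (γ : (ℕ → ℕ) → ℕ → ℕ) (t f : ℕ → ℕ), Continuous γ → t ≠ f →
      ¬ ((γ (fun _ => 0) = t) ∧ ∀ x : ℕ → ℕ, x ≠ (fun _ => 0) → γ x = f) := by
  refine ⟨exists_part_dom_iff_continuous _ (fun _ => 0),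
    exists_part_dom_iff_continuous _ (fun _ => 0), ?_⟩
  rintro γ t f hγ htf ⟨hγ₀, hγf⟩
  exact htf (hγ₀ ▸ hγ.eq_of_forall_ne_eq hγf)
end

section
/- In every nontotal pca, the halting set H = {⟨a,b⟩ : a·b↓} is computably enumerable but not decidable. -/
/-- The halting set `H = {⟨a,b⟩ : a·b↓}` of a pca. -/
def PCA.Hset {A : Type*} (P : PCA A) : Set A :=
  {x : A | ∃ a b : A, P.pair (some a) (some b) = some x ∧ (P.app a b).isSome}

/-! Bracket abstraction makes every term in one variable over `A` an element of `A`
(combinatory completeness). Since `⟨a,b⟩·c = c·a·b`, the element `λ*p. (p·true)·(p·false)`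
applied to `⟨a,b⟩` computes `a·b`, so `H` is c.e. Given a decider `f` for `H` and a
nowhere-defined `m`, take `g = λ*x. f·⟨x,x⟩·m·k·x`: if `⟨g,g⟩ ∈ H` then `f` answers `true`
and `g·g = m·g` diverges, otherwise `f` answers `false` and `g·g = k·g` converges. -/

namespace PCA
variable {A : Type*} (P : PCA A) {x y : Option A}

theorem ap_some (a b : A) : P.ap (some a) (some b) = P.app a b := rfl

theorem ap_ap_K' (x : Option A) (hy : y.isSome) : P.ap (P.ap P.K' x) y = x := by
  obtain ⟨b, rfl⟩ := Option.isSome_iff_exists.mp hy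
  cases x with
  | none => rfl
  | some a => exact P.k_spec a b

theorem ap_K'_isSome (hx : x.isSome) : (P.ap P.K' x).isSome := by
  obtain ⟨a, rfl⟩ := Option.isSome_iff_exists.mp hx
  have h := P.ap_ap_K' (some a) (y := some a) rfl
  cases hka : P.ap P.K' (some a) with
  | none => rw [hka] at h; cases h
  | some _ => rfl

theorem ap_ap_ap_S' (x y z : Option A) :
    P.ap (P.ap (P.ap P.S' x) y) z = P.ap (P.ap x z) (P.ap y z) := by
  cases x <;> cases y <;> cases z <;> first | rfl | exact P.s_spec _ _ _ | simp [ap, pap]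

theorem ap_ap_S'_isSome (hx : x.isSome) (hy : y.isSome) : (P.ap (P.ap P.S' x) y).isSome := by
  obtain ⟨a, rfl⟩ := Option.isSome_iff_exists.mp hx
  obtain ⟨b, rfl⟩ := Option.isSome_iff_exists.mp hy
  exact P.s_defined a b

theorem i_isSome : P.i.isSome := P.s_defined P.k P.k

theorem ap_i (x : Option A) : P.ap P.i x = x := by
  cases x with
  | none => cases P.i <;> rfl
  | some c => rw [i, ap_ap_ap_S', ap_ap_K' _ _ (P.ap_K'_isSome rfl)]

theorem fls_isSome : P.fls.isSome := P.ap_K'_isSome P.i_isSome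

theorem ap_ap_tru (x : Option A) (hy : y.isSome) : P.ap (P.ap P.tru x) y = x :=
  P.ap_ap_K' x hy

theorem ap_ap_fls (hx : x.isSome) (y : Option A) : P.ap (P.ap P.fls x) y = y := by
  rw [fls, ap_ap_K' _ _ hx, ap_i]

theorem pair_isSome (hx : x.isSome) (hy : y.isSome) : (P.pair x y).isSome :=
  P.ap_ap_S'_isSome (P.ap_ap_S'_isSome P.i_isSome (P.ap_K'_isSome hx)) (P.ap_K'_isSome hy)

theorem ap_pair (x y : Option A) (c : A) :
    P.ap (P.pair x y) (some c) = P.ap (P.ap (some c) x) y := by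
  rw [pair, ap_ap_ap_S', ap_ap_ap_S', ap_i, ap_ap_K' _ _ rfl, ap_ap_K' _ _ rfl]

theorem ap_pair_tru (x : Option A) (hy : y.isSome) : P.ap (P.pair x y) P.tru = x :=
  (P.ap_pair x y P.k).trans (P.ap_ap_tru x hy)

theorem ap_pair_fls (hx : x.isSome) (y : Option A) : P.ap (P.pair x y) P.fls = y := by
  obtain ⟨f, hf⟩ := Option.isSome_iff_exists.mp P.fls_isSome
  rw [hf, ap_pair, ← hf, ap_ap_fls _ hx]

theorem pair_some_inj {a b a' b' : A} :
    P.pair (some a) (some b) = P.pair (some a') (some b') ↔ a = a' ∧ b = b' := by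
  refine ⟨fun h => ⟨?_, ?_⟩, by rintro ⟨rfl, rfl⟩; rfl⟩
  · simpa [ap_pair_tru] using congrArg (P.ap · P.tru) h
  · simpa [ap_pair_fls] using congrArg (P.ap · P.fls) h

theorem mem_Hset_iff_of_pair_eq {a b p : A} (hp : P.pair (some a) (some b) = some p) :
    p ∈ P.Hset ↔ (P.app a b).isSome := by
  constructor
  · rintro ⟨a', b', hp', hab'⟩
    obtain ⟨rfl, rfl⟩ := P.pair_some_inj.mp (hp'.trans hp.symm)
    exact hab'
  · exact fun hab => ⟨a, b, hp, hab⟩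

end PCA

inductive PTerm (A : Type*) where
  | var : PTerm A
  | const : A → PTerm A
  | app : PTerm A → PTerm A → PTerm A

namespace PCA
variable {A : Type*} (P : PCA A)

def eval (P : PCA A) : PTerm A → A → Option A
  | .var, x => some x
  | .const a, _ => some a
  | .app t u, x => P.ap (P.eval t x) (P.eval u x)

theorem exists_app_eq_eval (t : PTerm A) : ∃ e : A, ∀ x, P.app e x = P.eval t x := by
  induction t with
  | var =>
    obtain ⟨i, hi⟩ := Option.isSome_iff_exists.mp P.i_isSome
    exact ⟨i, fun x => by rw [← ap_some, ← hi, ap_i]; rfl⟩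
  | const a =>
    obtain ⟨e, he⟩ := Option.isSome_iff_exists.mp (P.ap_K'_isSome (x := some a) rfl)
    exact ⟨e, fun x => by rw [← ap_some, ← he, ap_ap_K' _ _ rfl]; rfl⟩
  | app t u iht ihu =>
    obtain ⟨et, het⟩ := iht
    obtain ⟨eu, heu⟩ := ihu
    obtain ⟨e, he⟩ := Option.isSome_iff_exists.mp
      (P.ap_ap_S'_isSome (x := some et) (y := some eu) rfl rfl)
    refine ⟨e, fun x => ?_⟩
    rw [← ap_some, ← he, ap_ap_ap_S', ap_some, ap_some, het, heu]
    rfl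

theorem exists_eval_eq_pair_self :
    ∃ t : PTerm A, ∀ x, P.eval t x = P.pair (some x) (some x) := by
  obtain ⟨i, hi⟩ := Option.isSome_iff_exists.mp P.i_isSome
  let kx : PTerm A := .app (.const P.k) .var
  exact ⟨.app (.app (.const P.s) (.app (.app (.const P.s) (.const i)) kx)) kx,
    fun x => by simp only [eval, pair, hi]; rfl⟩

theorem exists_forall_app_eq_none (hnt : ∃ f g : A, P.app f g = none) :
    ∃ m : A, ∀ z, P.app m z = none := by
  obtain ⟨u, v, huv⟩ := hnt
  obtain ⟨m, hm⟩ := P.exists_app_eq_eval (.app (.const u) (.const v))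
  exact ⟨m, fun z => by simp only [hm, eval, ap_some, huv]⟩

theorem exists_app_eq_app_of_pair_eq :
    ∃ e : A, ∀ a b p : A, P.pair (some a) (some b) = some p → P.app e p = P.app a b := by
  obtain ⟨f, hf⟩ := Option.isSome_iff_exists.mp P.fls_isSome
  obtain ⟨e, he⟩ := P.exists_app_eq_eval (.app (.app .var (.const P.k)) (.app .var (.const f)))
  refine ⟨e, fun a b p hp => ?_⟩
  have hk : P.ap (some p) (some P.k) = some a := by
    rw [← hp]; exact P.ap_pair_tru _ rfl
  have hf' : P.ap (some p) (some f) = some b := by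
    rw [← hp, ← hf]; exact P.ap_pair_fls rfl _
  simp only [he, eval, hk, hf', ap_some]

def Decides (f : A) (S : Set A) : Prop :=
  ∀ p : A, (p ∈ S → P.app f p = P.tru) ∧ (p ∉ S → P.app f p = P.fls)

theorem not_decides_Hset (hnt : ∃ f g : A, P.app f g = none) (f : A) :
    ¬ P.Decides f P.Hset := by
  intro hf
  obtain ⟨m, hm⟩ := P.exists_forall_app_eq_none hnt
  obtain ⟨d, hd⟩ := P.exists_eval_eq_pair_self
  obtain ⟨g, hg⟩ := P.exists_app_eq_eval
    (.app (.app (.app (.app (.const f) d) (.const m)) (.const P.k)) .var)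
  obtain ⟨p, hp⟩ :=
    Option.isSome_iff_exists.mp (P.pair_isSome (x := some g) (y := some g) rfl rfl)
  have hgg : P.app g g = P.ap (P.ap (P.ap (P.app f p) (some m)) P.K') (some g) := by
    simp only [hg, eval, hd, hp, ap_some]; rfl
  have hmem := P.mem_Hset_iff_of_pair_eq hp
  by_cases h : p ∈ P.Hset
  · have hdiv : P.app g g = none := by
      rw [hgg, (hf p).1 h, ap_ap_tru _ _ rfl, ap_some, hm]
    simp [hmem, hdiv] at h
  · have hconv : (P.app g g).isSome := by
      rw [hgg, (hf p).2 h, ap_ap_fls _ rfl]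
      exact P.ap_K'_isSome rfl
    exact h (hmem.mpr hconv)

end PCA

/-- In every nontotal pca, the halting set is c.e. but not decidable. -/
theorem halting_set_ce_not_decidable {A : Type*} (P : PCA A)
    (hnt : ∃ f g : A, P.app f g = none) :
    (∃ e : A, ∀ a b p : A, P.pair (some a) (some b) = some p →
        ((P.app e p).isSome ↔ (P.app a b).isSome)) ∧
    ¬ ∃ f : A, P.total f ∧ ∀ p : A,
        (p ∈ P.Hset → P.app f p = P.tru) ∧ (p ∉ P.Hset → P.app f p = P.fls) := by
  obtain ⟨e, he⟩ := P.exists_app_eq_app_of_pair_eq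
  exact ⟨⟨e, fun a b p hp => by rw [he a b p hp]⟩,
    fun ⟨f, _, hf⟩ => P.not_decides_Hset hnt f hf⟩
end

section
/- There is no 1-1 computable numbering (ψ_x) of all unary partial computable functions such that ω with the application n·m = ψ_n(m) is a pca. Equivalently, there is no extensional pca structure on the set of unary p.c. functions with the natural application. -/
/-!
Suppose `ψ` were such a numbering with combinators `k` and `s`. With `K a = k·a` and
`S a b = s·a·b`, the index `f a = S (K (K 0)) (S (K a) (K a))` computes
`c ↦ (ψ_a(a); 0)`, so `ψ_{f a}` is the constant function `ψ_{K 0}` exactly when `ψ_a(a)` halts.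
By injectivity, `ψ_a(a)↓ ↔ f a = K 0`, and `f` is computable, so the diagonal halting set of `ψ`
would be decidable; a diagonal argument against the surjectivity of `ψ` rules this out.
-/

namespace Numbering

variable {ψ : ℕ → ℕ →. ℕ}

theorem not_computablePred_dom_diag (hsurj : ∀ f : ℕ →. ℕ, Partrec f → ∃ x, ψ x = f) :
    ¬ComputablePred fun a => (ψ a a).Dom := by
  rintro ⟨_, hdec⟩
  obtain ⟨e, he⟩ := hsurj (fun a => bif decide (ψ a a).Dom then Part.none else Part.some 0)
    (Partrec.cond hdec Partrec.none (Computable.const 0).partrec)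
  have hee := congrFun he e
  by_cases h : (ψ e e).Dom
  · have := hee ▸ h
    simp [h] at this
  · exact h (hee ▸ by simp [h])

theorem computable_of_apply_eq_some (hψ : Partrec₂ ψ) {α : Type*} [Primcodable α]
    {F G H : α → ℕ} (hG : Computable G) (hH : Computable H)
    (h : ∀ a, ψ (G a) (H a) = Part.some (F a)) : Computable F :=
  (hψ.comp hG hH).of_eq_tot fun a => h a ▸ Part.mem_some _

theorem exists_const_index {k : ℕ} (hk : ∀ a b, ((ψ k a).bind fun f => ψ f b) = Part.some a) :
    ∃ K : ℕ → ℕ, (∀ a, ψ k a = Part.some (K a)) ∧ ∀ a b, ψ (K a) b = Part.some a := by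
  have hdom : ∀ a, ∃ x, x ∈ ψ k a := fun a =>
    Part.dom_iff_mem.1 (Part.Dom.of_bind (f := fun f => ψ f 0) (by rw [hk]; trivial))
  choose K hKk using hdom
  refine ⟨K, fun a => Part.eq_some_iff.2 (hKk a), fun a b => ?_⟩
  simpa only [Part.eq_some_iff.2 (hKk a), Part.bind_some] using hk a b

theorem exists_subst_index {s : ℕ} (hsdom : ∀ a b, ((ψ s a).bind fun f => ψ f b).Dom)
    (hs : ∀ a b c, (((ψ s a).bind fun f => ψ f b).bind fun f => ψ f c)
      = (ψ a c).bind fun f => (ψ b c).bind fun g => ψ f g) :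
    ∃ (S₁ : ℕ → ℕ) (S : ℕ → ℕ → ℕ), (∀ a, ψ s a = Part.some (S₁ a)) ∧
      (∀ a b, ψ (S₁ a) b = Part.some (S a b)) ∧
      ∀ a b c, ψ (S a b) c = (ψ a c).bind fun f => (ψ b c).bind fun g => ψ f g := by
  choose S₁ hS₁s using fun a => Part.dom_iff_mem.1 (hsdom a 0).of_bind
  replace hS₁s := fun a => Part.eq_some_iff.2 (hS₁s a)
  have hdom : ∀ a b, ∃ x, x ∈ ψ (S₁ a) b := fun a b =>
    Part.dom_iff_mem.1 (by simpa only [hS₁s, Part.bind_some] using hsdom a b)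
  choose S hSS₁ using hdom
  replace hSS₁ := fun a b => Part.eq_some_iff.2 (hSS₁ a b)
  refine ⟨S₁, S, hS₁s, hSS₁, fun a b c => ?_⟩
  simpa only [hS₁s, hSS₁, Part.bind_some] using hs a b c

section Combinators

variable {K : ℕ → ℕ} {S : ℕ → ℕ → ℕ}

theorem apply_subst_const_diag (hK : ∀ a b, ψ (K a) b = Part.some a)
    (hS : ∀ a b c, ψ (S a b) c = (ψ a c).bind fun f => (ψ b c).bind fun g => ψ f g)
    (z a c : ℕ) :
    ψ (S (K (K z)) (S (K a) (K a))) c = (ψ a a).bind fun _ => Part.some z := by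
  simp only [hS, hK, Part.bind_some]

theorem dom_diag_iff (hinj : Function.Injective ψ) (hK : ∀ a b, ψ (K a) b = Part.some a)
    (hS : ∀ a b c, ψ (S a b) c = (ψ a c).bind fun f => (ψ b c).bind fun g => ψ f g)
    (a : ℕ) :
    (ψ a a).Dom ↔ S (K (K 0)) (S (K a) (K a)) = K 0 := by
  constructor
  · intro h
    apply hinj
    funext c
    rw [apply_subst_const_diag hK hS, hK, Part.Dom.bind h]
  · intro h
    have : (ψ (S (K (K 0)) (S (K a) (K a))) 0).Dom := by rw [h, hK]; trivial
    rw [apply_subst_const_diag hK hS] at this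
    exact this.of_bind

end Combinators

end Numbering

open Numbering in
/-- There is no 1-1 computable numbering of all unary p.c. functions such that
`ω` with application `n·m = ψ_n(m)` is a pca (i.e. has Feferman combinators
`k` and `s`). -/
theorem no_extensional_pca_on_pc_functions :
    ¬ ∃ ψ : ℕ → ℕ →. ℕ,
      Partrec₂ ψ ∧
      (∀ f : ℕ →. ℕ, Partrec f → ∃ x : ℕ, ψ x = f) ∧
      Function.Injective ψ ∧
      ∃ k s : ℕ,
        (∀ a b : ℕ, ((ψ k a).bind fun f => ψ f b) = Part.some a) ∧
        (∀ a b : ℕ, ((ψ s a).bind fun f => ψ f b).Dom) ∧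
        (∀ a b c : ℕ,
          (((ψ s a).bind fun f => ψ f b).bind fun f => ψ f c)
            = (ψ a c).bind fun f => (ψ b c).bind fun g => ψ f g) := by
  rintro ⟨ψ, hψ, hsurj, hinj, k, s, hk, hsdom, hs⟩
  obtain ⟨K, hKk, hK⟩ := exists_const_index hk
  obtain ⟨S₁, S, hS₁s, hSS₁, hS⟩ := exists_subst_index hsdom hs
  have hKc : Computable K :=
    computable_of_apply_eq_some hψ (Computable.const k) Computable.id hKk
  have hS₁c : Computable S₁ :=
    computable_of_apply_eq_some hψ (Computable.const s) Computable.id hS₁s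
  have hSc : Computable₂ S :=
    computable_of_apply_eq_some hψ (hS₁c.comp Computable.fst) Computable.snd
      fun p => hSS₁ p.1 p.2
  have hred : Computable fun a => S (K (K 0)) (S (K a) (K a)) :=
    hSc.comp (Computable.const _) (hSc.comp hKc hKc)
  have hdec : ComputablePred fun a => S (K (K 0)) (S (K a) (K a)) = K 0 :=
    (Primrec.eq.decide.to_comp.comp hred (Computable.const (K 0))).computablePred
  exact not_computablePred_dom_diag hsurj
    (hdec.of_eq fun a => (dom_diag_iff hinj hK hS a).symm)
end

section
/- In every pca, the sets A = {a : a·a↓ = 0̄} and B = {a : a·a↓ = 1̄} are computably inseparable: there is no decidable set C with A ⊆ C ⊆ complement of B, provided 0̄ ≠ 1̄ (which holds when the pca is nontrivial). -/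
theorem diagonal_sets_computably_inseparable_general {A : Type*} (P : PCA A) :
    ¬ ∃ C : Set A,
        (∃ c : A, P.total c ∧ ∀ a : A,
          (a ∈ C → P.app c a = P.numeral 1) ∧ (a ∉ C → P.app c a = P.numeral 0)) ∧
        {a : A | P.app a a = P.numeral 0} ⊆ C ∧
        C ⊆ {a : A | P.app a a = P.numeral 1}ᶜ := by
  rintro ⟨C, ⟨c, -, hc⟩, hA, hB⟩
  by_cases hcC : c ∈ C
  · exact hB hcC ((hc c).1 hcC)
  · exact hcC (hA ((hc c).2 hcC))

/-- In any pca with `0̄ ≠ 1̄`, the sets `{a : a·a↓ = 0̄}` and `{a : a·a↓ = 1̄}` are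
computably inseparable: no decidable set contains the first and misses the second. -/
theorem diagonal_sets_computably_inseparable {A : Type*} (P : PCA A)
    (h01 : P.numeral 0 ≠ P.numeral 1) :
    ¬ ∃ C : Set A,
        (∃ c : A, P.total c ∧ ∀ a : A,
          (a ∈ C → P.app c a = P.numeral 1) ∧ (a ∉ C → P.app c a = P.numeral 0)) ∧
        {a : A | P.app a a = P.numeral 0} ⊆ C ∧
        C ⊆ {a : A | P.app a a = P.numeral 1}ᶜ :=
  diagonal_sets_computably_inseparable_general P
end

section
/- In any total nontrivial pca (combinatory algebra), 0̄ and 1̄ are inseparable: there is no total 0̄-1̄-valued c ∈ 𝔸 with c·a = 0̄ ⟹ a ≠ 1̄ and c·a = 1̄ ⟹ a ≠ 0̄. -/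
/-- `0̄` and `1̄` are separable in the pca `P`. -/
def PCA.Sep01 {A : Type*} (P : PCA A) : Prop :=
  ∃ c : A, P.total c ∧
    (∀ a : A, P.app c a = P.numeral 0 ∨ P.app c a = P.numeral 1) ∧
    ∀ a : A, (P.app c a = P.numeral 0 → some a ≠ P.numeral 1) ∧
             (P.app c a = P.numeral 1 → some a ≠ P.numeral 0)

namespace PCA

variable {A : Type*} (P : PCA A) (htot : ∀ a b : A, (P.app a b).isSome)

noncomputable def tapp (a b : A) : A := (P.app a b).get (htot a b)

local infixl:70 " ⬝ " => tapp P htot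

theorem app_eq_some_tapp (a b : A) : P.app a b = some (a ⬝ b) :=
  (Option.some_get (htot a b)).symm

theorem ap_some_some (a b : A) : P.ap (some a) (some b) = some (a ⬝ b) := by
  simp [ap, pap, app_eq_some_tapp P htot]

theorem k_tapp (a b : A) : P.k ⬝ a ⬝ b = a := by
  simpa [pap, app_eq_some_tapp P htot] using P.k_spec a b

theorem s_tapp (a b c : A) : P.s ⬝ a ⬝ b ⬝ c = a ⬝ c ⬝ (b ⬝ c) := by
  simpa [pap, app_eq_some_tapp P htot] using P.s_spec a b c

noncomputable def iVal : A := P.s ⬝ P.k ⬝ P.k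

theorem iVal_tapp (a : A) : P.iVal htot ⬝ a = a := by
  rw [iVal, s_tapp, k_tapp]

theorem i_eq_some_iVal : P.i = some (P.iVal htot) := by
  rw [i, S', K', ap_some_some, ap_some_some, iVal]

noncomputable def flsVal : A := P.k ⬝ P.iVal htot

theorem flsVal_tapp (a b : A) : P.flsVal htot ⬝ a ⬝ b = b := by
  rw [flsVal, k_tapp, iVal_tapp]

theorem fls_eq_some_flsVal : P.fls = some (P.flsVal htot) := by
  rw [fls, i_eq_some_iVal P htot, K', ap_some_some, flsVal]

noncomputable def pairVal (a b : A) : A :=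
  P.s ⬝ (P.s ⬝ P.iVal htot ⬝ (P.k ⬝ a)) ⬝ (P.k ⬝ b)

theorem pairVal_tapp (a b c : A) : P.pairVal htot a b ⬝ c = c ⬝ a ⬝ b := by
  rw [pairVal, s_tapp, k_tapp, s_tapp, iVal_tapp, k_tapp]

theorem pair_some_some (a b : A) : P.pair (some a) (some b) = some (P.pairVal htot a b) := by
  simp only [pair, i_eq_some_iVal P htot, S', K', ap_some_some P htot, pairVal]

noncomputable def numVal : ℕ → A
  | 0 => P.iVal htot
  | n + 1 => P.pairVal htot (P.flsVal htot) (numVal n)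

theorem numeral_eq_some_numVal : ∀ n : ℕ, P.numeral n = some (P.numVal htot n)
  | 0 => i_eq_some_iVal P htot
  | n + 1 => by
    rw [numeral, numVal, fls_eq_some_flsVal P htot, numeral_eq_some_numVal n, pair_some_some]

theorem numVal_zero_tapp_k (a b : A) : P.numVal htot 0 ⬝ P.k ⬝ a ⬝ b = a := by
  rw [numVal, iVal_tapp, k_tapp]

theorem numVal_one_tapp_k (a b : A) : P.numVal htot 1 ⬝ P.k ⬝ a ⬝ b = b := by
  rw [numVal, pairVal_tapp, k_tapp, flsVal_tapp]

noncomputable def postApp (f b : A) : A := P.s ⬝ f ⬝ (P.k ⬝ b)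

theorem postApp_tapp (f b a : A) : P.postApp htot f b ⬝ a = f ⬝ a ⬝ b := by
  rw [postApp, s_tapp, k_tapp]

/-- Curry's fixed point `W ⬝ W` with `W = λx. f (x x)`. -/
noncomputable def fixPt (f : A) : A :=
  let w := P.s ⬝ (P.k ⬝ f) ⬝ (P.s ⬝ P.iVal htot ⬝ P.iVal htot)
  w ⬝ w

theorem fixPt_eq (f : A) : P.fixPt htot f = f ⬝ P.fixPt htot f := by
  conv_lhs => rw [fixPt, s_tapp, k_tapp, s_tapp, iVal_tapp]
  rfl

theorem exists_numVal_swap (c : A) : ∃ d : A,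
    (c ⬝ d = P.numVal htot 0 → d = P.numVal htot 1) ∧
    (c ⬝ d = P.numVal htot 1 → d = P.numVal htot 0) := by
  set g := P.postApp htot (P.postApp htot (P.postApp htot c P.k) (P.numVal htot 1))
    (P.numVal htot 0)
  have hd : P.fixPt htot g = c ⬝ P.fixPt htot g ⬝ P.k ⬝ P.numVal htot 1 ⬝ P.numVal htot 0 := by
    conv_lhs => rw [fixPt_eq]
    simp only [g, postApp_tapp]
  refine ⟨P.fixPt htot g, fun h0 => ?_, fun h1 => ?_⟩
  · rw [hd, h0, numVal_zero_tapp_k]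
  · rw [hd, h1, numVal_one_tapp_k]

end PCA

theorem zero_one_inseparable_in_total_pca_general {A : Type*} (P : PCA A)
    (htot : ∀ a b : A, (P.app a b).isSome) : ¬ P.Sep01 := by
  rintro ⟨c, -, hrange, hsep⟩
  obtain ⟨d, hd0, hd1⟩ := P.exists_numVal_swap htot c
  simp only [P.app_eq_some_tapp htot, P.numeral_eq_some_numVal htot, Option.some.injEq]
    at hrange hsep
  rcases hrange d with h0 | h1
  · exact (hsep d).1 h0 (congrArg some (hd0 h0))
  · exact (hsep d).2 h1 (congrArg some (hd1 h1))

/-- In any total nontrivial pca, `0̄` and `1̄` are inseparable. -/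
theorem zero_one_inseparable_in_total_pca {A : Type*} [Nontrivial A] (P : PCA A)
    (htot : ∀ a b : A, (P.app a b).isSome) : ¬ P.Sep01 :=
  zero_one_inseparable_in_total_pca_general P htot
end
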